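/- Let D ≥ 1, h > 0, p ≥ 1 an integer, let c_R, c_Q ∈ ℝᴰ, and let M_α ∈ ℝ be given for each multi-index α ∈ ℕᴰ with α[d] < p for all d. Define L_β = ((−1)^{|β|}/β!) Σ_{α[d] < p ∀d} M_α h_{α+β}((c_Q − c_R)/√(2h²)) for each β ∈ ℕᴰ. Then for every q ∈ ℝᴰ, the far-field-to-local translation identity holds: Σ_{α[d] < p ∀d} M_α h_α((q − c_R)/√(2h²)) = Σ_{β ∈ ℕᴰ} L_β ((q − c_Q)/√(2h²))^β, where the multi-index series on the right converges (the family is summable). -/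

import Mathlib

/-
Each Hermite function is, up to sign, a derivative of the Gaussian `e^{-t²}`, which is the real
trace of an entire function. Its Taylor expansion therefore converges on all of `ℝ`, giving
`h_n(a + y) = Σ_k (-1)^k / k! · h_{n+k}(a) · y^k`. Over `ℝ` convergence is absolute, so the
product over the `D` coordinates of these one-dimensional expansions is the multi-index expansion
of `h_α(a + y)`; a finite linear combination in `α` gives the translation identity, with
`a = (c_Q − c_R)/√(2h²)` and `y = (q − c_Q)/√(2h²)`.
-/

open Finset

/-- The `n`-th Hermite function: `hₙ(t) = (−1)ⁿ (dⁿ/dtⁿ) e^{−t²}`. -/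
noncomputable def hermiteFun (n : ℕ) (t : ℝ) : ℝ :=
  (-1 : ℝ) ^ n * iteratedDeriv n (fun x => Real.exp (-x ^ 2)) t

/-- Multivariate Hermite function `h_α(x) = ∏_{d} h_{α[d]}(x[d])`. -/
noncomputable def hermiteFunMulti {D : ℕ} (α : Fin D → ℕ) (x : Fin D → ℝ) : ℝ :=
  ∏ d, hermiteFun (α d) (x d)

/-- Multi-index factorial `β! = ∏_d (β[d])!`. -/
def mFactorial {D : ℕ} (β : Fin D → ℕ) : ℕ := ∏ d, Nat.factorial (β d)

/-- Multi-index power `x^β = ∏_d (x[d])^{β[d]}`. -/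
def mPow {D : ℕ} (x : Fin D → ℝ) (β : Fin D → ℕ) : ℝ := ∏ d, (x d) ^ (β d)

/-- Multi-index degree `|β| = Σ_d β[d]`. -/
def mDeg {D : ℕ} (β : Fin D → ℕ) : ℕ := ∑ d, β d

section FinProd

variable {R κ : Type*} [NormedCommRing R]

theorem Fin.prod_apply_consEquiv {n : ℕ} (f : Fin (n + 1) → κ → R) (x : κ × (Fin n → κ)) :
    ∏ i, f i (Fin.consEquiv (fun _ => κ) x i) = f 0 x.1 * ∏ i : Fin n, f i.succ (x.2 i) := by
  simp [Fin.consEquiv, Fin.prod_univ_succ]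

theorem summable_norm_prod_pi {n : ℕ} {f : Fin n → κ → R}
    (hf : ∀ i, Summable fun k => ‖f i k‖) :
    Summable fun β : Fin n → κ => ‖∏ i, f i (β i)‖ := by
  induction n with
  | zero => exact .of_finite
  | succ n ih =>
    rw [← (Fin.consEquiv fun _ => κ).summable_iff]
    simp only [Function.comp_def, Fin.prod_apply_consEquiv]
    -- `(e :)` elaborates `e` before matching the goal, whose shape `?f x.1 * ?g x.2` is not a
    -- higher-order pattern.
    exact ((hf 0).mul_norm (ih fun i => hf i.succ) :)

theorem hasSum_prod_pi_of_summable_norm [CompleteSpace R] {n : ℕ} {f : Fin n → κ → R}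
    {a : Fin n → R} (hf : ∀ i, HasSum (f i) (a i)) (hf' : ∀ i, Summable fun k => ‖f i k‖) :
    HasSum (fun β : Fin n → κ => ∏ i, f i (β i)) (∏ i, a i) := by
  induction n with
  | zero => simp
  | succ n ih =>
    rw [← (Fin.consEquiv fun _ => κ).hasSum_iff, Fin.prod_univ_succ]
    simp only [Function.comp_def, Fin.prod_apply_consEquiv]
    have hsum := summable_mul_of_summable_norm (hf' 0) (summable_norm_prod_pi fun i => hf' i.succ)
    exact ((hf 0).mul (ih (fun i => hf i.succ) fun i => hf' i.succ) hsum :)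

end FinProd

theorem iteratedDeriv_iteratedDeriv {𝕜 F : Type*} [NontriviallyNormedField 𝕜]
    [NormedAddCommGroup F] [NormedSpace 𝕜 F] (f : 𝕜 → F) (m n : ℕ) :
    iteratedDeriv m (iteratedDeriv n f) = iteratedDeriv (n + m) f := by
  simp only [iteratedDeriv_eq_iterate, ← Function.iterate_add_apply, add_comm]

theorem iteratedDeriv_re_comp_ofReal {f : ℂ → ℂ} (hf : Differentiable ℂ f) (n : ℕ) :
    iteratedDeriv n (fun x : ℝ => (f x).re) = fun t : ℝ => (iteratedDeriv n f t).re := by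
  induction n with
  | zero => simp
  | succ n ih =>
    funext t
    rw [iteratedDeriv_succ, ih, iteratedDeriv_succ]
    exact ((hf.contDiff.differentiable_iteratedDeriv n (WithTop.coe_lt_top _) t).hasDerivAt
      |>.real_of_complex).deriv

theorem hasSum_taylorSeries_re_of_entire {f : ℂ → ℂ} (hf : Differentiable ℂ f) (a y : ℝ) :
    HasSum (fun k : ℕ => (iteratedDeriv k f a).re / k.factorial * y ^ k) (f ↑(a + y)).re := by
  convert Complex.hasSum_re (Complex.hasSum_taylorSeries_of_entire hf a ↑(a + y)) using 2 with k
  rw [smul_eq_mul, smul_eq_mul, ← mul_assoc, Complex.ofReal_add, add_sub_cancel_left,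
    ← Complex.ofReal_natCast, ← Complex.ofReal_inv, ← Complex.ofReal_pow, ← Complex.ofReal_mul,
    Complex.re_ofReal_mul]
  ring

noncomputable def complexGaussian (z : ℂ) : ℂ := Complex.exp (-z ^ 2)

theorem differentiable_complexGaussian : Differentiable ℂ complexGaussian :=
  ((differentiable_pow 2).neg).cexp

theorem hermiteFun_eq_re (n : ℕ) (t : ℝ) :
    hermiteFun n t = (-1) ^ n * (iteratedDeriv n complexGaussian t).re := by
  have hgauss : (fun x : ℝ => Real.exp (-x ^ 2)) = fun x : ℝ => (complexGaussian x).re := by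
    funext x
    rw [complexGaussian, ← Complex.ofReal_pow, ← Complex.ofReal_neg, ← Complex.ofReal_exp,
      Complex.ofReal_re]
  rw [hermiteFun, hgauss, iteratedDeriv_re_comp_ofReal differentiable_complexGaussian]

theorem hasSum_hermiteFun_add (n : ℕ) (a y : ℝ) :
    HasSum (fun k : ℕ => (-1) ^ k / k.factorial * hermiteFun (n + k) a * y ^ k)
      (hermiteFun n (a + y)) := by
  have htaylor := (hasSum_taylorSeries_re_of_entire
    (differentiable_complexGaussian.contDiff.differentiable_iteratedDeriv n (WithTop.coe_lt_top _))
    a y).mul_left ((-1) ^ n)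
  rw [← hermiteFun_eq_re] at htaylor
  refine htaylor.congr_fun fun k => ?_
  rw [iteratedDeriv_iteratedDeriv, hermiteFun_eq_re, pow_add]
  have hsign : ((-1 : ℝ) ^ k) ^ 2 = 1 := by rw [← pow_mul, mul_comm, pow_mul, neg_one_sq, one_pow]
  linear_combination
    ((-1) ^ n * (iteratedDeriv (n + k) complexGaussian a).re * y ^ k / k.factorial) * hsign

theorem hasSum_hermiteFunMulti_add {D : ℕ} (α : Fin D → ℕ) (a y : Fin D → ℝ) :
    HasSum (fun β : Fin D → ℕ => (-1) ^ mDeg β / mFactorial β *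
        hermiteFunMulti (fun d => α d + β d) a * mPow y β)
      (hermiteFunMulti α fun d => a d + y d) := by
  have hprod := hasSum_prod_pi_of_summable_norm (fun d => hasSum_hermiteFun_add (α d) (a d) (y d))
    fun d => (hasSum_hermiteFun_add (α d) (a d) (y d)).summable.norm
  refine hprod.congr_fun fun β => ?_
  simp only [hermiteFunMulti, mPow, mDeg, mFactorial, prod_mul_distrib, prod_div_distrib,
    prod_pow_eq_pow_sum, Nat.cast_prod]

theorem farfield_to_local_translation_general (D : ℕ) (h : ℝ)
    (p : ℕ) (cR cQ : Fin D → ℝ)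
    (M : (Fin D → Fin p) → ℝ)
    (L : (Fin D → ℕ) → ℝ)
    (hL : ∀ β : Fin D → ℕ, L β =
      ((-1 : ℝ) ^ (mDeg β) / (mFactorial β : ℝ)) *
        ∑ α : Fin D → Fin p, M α *
          hermiteFunMulti (fun d => (α d : ℕ) + β d)
            (fun d => (cQ d - cR d) / Real.sqrt (2 * h ^ 2)))
    (q : Fin D → ℝ) :
    HasSum
      (fun β : Fin D → ℕ =>
        L β * mPow (fun d => (q d - cQ d) / Real.sqrt (2 * h ^ 2)) β)
      (∑ α : Fin D → Fin p, M α *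
        hermiteFunMulti (fun d => (α d : ℕ))
          (fun d => (q d - cR d) / Real.sqrt (2 * h ^ 2))) := by
  set s := Real.sqrt (2 * h ^ 2)
  have hcenter : (fun d => (cQ d - cR d) / s + (q d - cQ d) / s) = fun d => (q d - cR d) / s := by
    funext d
    ring
  have hshift (α : Fin D → Fin p) := hasSum_hermiteFunMulti_add (fun d => (α d : ℕ))
    (fun d => (cQ d - cR d) / s) (fun d => (q d - cQ d) / s)
  simp only [hcenter] at hshift
  refine (hasSum_sum fun α _ => (hshift α).mul_left (M α)).congr_fun fun β => ?_
  rw [hL, mul_sum, sum_mul]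
  exact sum_congr rfl fun α _ => by ring

/-- Far-field–to–local (F2L) translation operator for the Gaussian kernel:
given far-field coefficients `M_α` (for `α[d] < p`) centered at `c_R`, the
translated local coefficients
`L_β = ((−1)^{|β|}/β!) Σ_{α < p} M_α h_{α+β}((c_Q − c_R)/√(2h²))` satisfy
`Σ_{α < p} M_α h_α((q − c_R)/√(2h²)) = Σ_{β ∈ ℕᴰ} L_β ((q − c_Q)/√(2h²))^β`,
the right-hand family being summable. -/
theorem farfield_to_local_translation (D : ℕ) (hD : 1 ≤ D) (h : ℝ) (hh : 0 < h)
    (p : ℕ) (hp : 1 ≤ p) (cR cQ : Fin D → ℝ)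
    (M : (Fin D → Fin p) → ℝ)
    (L : (Fin D → ℕ) → ℝ)
    (hL : ∀ β : Fin D → ℕ, L β =
      ((-1 : ℝ) ^ (mDeg β) / (mFactorial β : ℝ)) *
        ∑ α : Fin D → Fin p, M α *
          hermiteFunMulti (fun d => (α d : ℕ) + β d)
            (fun d => (cQ d - cR d) / Real.sqrt (2 * h ^ 2)))
    (q : Fin D → ℝ) :
    HasSum
      (fun β : Fin D → ℕ =>
        L β * mPow (fun d => (q d - cQ d) / Real.sqrt (2 * h ^ 2)) β)
      (∑ α : Fin D → Fin p, M α *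
        hermiteFunMulti (fun d => (α d : ℕ))
          (fun d => (q d - cR d) / Real.sqrt (2 * h ^ 2))) :=
  farfield_to_local_translation_general D h p cR cQ M L hL q
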